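/- arXiv:1105.3797 — 4 statements merged into one kernel-verified Lean document; each statement's English description precedes it below -/
import Mathlib

section
/- There exist two positive constants C₁ and C₂ such that for every u ∈ H with ‖u‖ > 1 one has Σ_{k=1}^{T+1} |Δu(k−1)|^{p(k−1)} ≥ C₁·‖u‖^{p⁻} − C₂. -/
/-- The norm ‖u‖ = (Σ_{k=1}^{T+1} |Δu(k−1)|²)^{1/2} on H. -/
noncomputable def normH (T : ℕ) (u : ℕ → ℝ) : ℝ :=
  Real.sqrt (∑ k ∈ Finset.Icc 1 (T + 1), |u k - u (k - 1)| ^ 2)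

theorem stmt0 (T : ℕ) (hT : 1 ≤ T) (p : ℕ → ℝ) (hp : ∀ k ≤ T + 1, 1 < p k)
    (pm : ℝ) (hpm : IsLeast (p '' Set.Icc 0 (T + 1)) pm) :
    ∃ C₁ > (0:ℝ), ∃ C₂ > (0:ℝ), ∀ u : ℕ → ℝ, u 0 = 0 → u (T + 1) = 0 →
      1 < normH T u →
      C₁ * normH T u ^ pm - C₂ ≤ ∑ k ∈ Finset.Icc 1 (T + 1), |u k - u (k - 1)| ^ p (k - 1) := by
  obtain ⟨⟨j, hj, hpj⟩, hlb⟩ := hpm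
  have hpm1 : 1 < pm := hpj ▸ hp j hj.2
  have hn : (0:ℝ) < (T:ℝ) + 1 := by positivity
  refine ⟨(1 / ((T:ℝ) + 1)) ^ (pm / 2), Real.rpow_pos_of_pos (by positivity) _, 1, one_pos,
    fun u hu0 hu1 hnorm => ?_⟩
  set S := ∑ k ∈ Finset.Icc 1 (T + 1), |u k - u (k - 1)| ^ 2 with hS
  have hSnn : 0 ≤ S := Finset.sum_nonneg fun k _ => by positivity
  have hne : (Finset.Icc 1 (T + 1)).Nonempty := ⟨1, by simp⟩
  obtain ⟨k₀, hk₀, hmax⟩ := Finset.exists_max_image (Finset.Icc 1 (T + 1))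
    (fun k => |u k - u (k - 1)|) hne
  set x := |u k₀ - u (k₀ - 1)| with hx
  have hxnn : 0 ≤ x := abs_nonneg _
  -- S ≤ (T+1) * x^2
  have hSle : S ≤ ((T:ℝ) + 1) * x ^ 2 := by
    calc S ≤ (T + 1) • (x ^ 2) := Finset.sum_le_card_nsmul _ _ _ (fun k hk => by
          have := hmax k hk
          exact pow_le_pow_left₀ (abs_nonneg _) this 2) |>.trans_eq (by
          rw [Nat.card_Icc]; simp)
      _ = ((T:ℝ) + 1) * x ^ 2 := by push_cast [nsmul_eq_mul]; ring
  -- normH ^ pm = S ^ (pm/2)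
  have hnormS : normH T u ^ pm = S ^ (pm / 2) := by
    rw [normH, ← hS, Real.sqrt_eq_rpow, ← Real.rpow_mul hSnn]
    ring_nf
  -- x ^ pm = (x^2) ^ (pm/2)
  have hxpm : x ^ pm = (x ^ 2 : ℝ) ^ (pm / 2) := by
    rw [← Real.rpow_natCast x 2, ← Real.rpow_mul hxnn]
    ring_nf
  have hS1 : 1 < S := by
    have := hnorm
    rw [normH, ← hS] at this
    nlinarith [Real.sq_sqrt hSnn, Real.sqrt_nonneg S]
  -- key chain
  have hC : (1 / ((T:ℝ) + 1)) ^ (pm / 2) * S ^ (pm / 2) ≤ x ^ pm := by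
    rw [hxpm, ← Real.mul_rpow (by positivity) hSnn]
    apply Real.rpow_le_rpow (by positivity) _ (by positivity)
    rw [div_mul_eq_mul_div, one_mul, div_le_iff₀ hn]
    linarith [hSle]
  have hpk₀ : pm ≤ p (k₀ - 1) := by
    apply hlb
    refine ⟨k₀ - 1, ⟨Nat.zero_le _, ?_⟩, rfl⟩
    simp only [Finset.mem_Icc] at hk₀; omega
  have hterm : x ^ pm - 1 ≤ x ^ p (k₀ - 1) := by
    rcases le_or_gt x 1 with h | h
    · have h1 : x ^ pm ≤ 1 := Real.rpow_le_one hxnn h (by linarith)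
      have h2 : 0 ≤ x ^ p (k₀ - 1) := Real.rpow_nonneg hxnn _
      linarith
    · have h1 : x ^ pm ≤ x ^ p (k₀ - 1) :=
        Real.rpow_le_rpow_of_exponent_le h.le hpk₀
      have h2 : (0:ℝ) ≤ x ^ p (k₀ - 1) := Real.rpow_nonneg hxnn _
      linarith
  have hsum : x ^ p (k₀ - 1) ≤ ∑ k ∈ Finset.Icc 1 (T + 1), |u k - u (k - 1)| ^ p (k - 1) :=
    Finset.single_le_sum (f := fun k => |u k - u (k - 1)| ^ p (k - 1)) (fun k _ => Real.rpow_nonneg (abs_nonneg _) _) hk₀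
  rw [hnormS]
  linarith
end

section
/- Assume hypothesis (H1) holds and p⁻ > q⁺ + 1. Then for every λ > 0 the functional J_λ is coercive, i.e. J_λ(u) → +∞ as ‖u‖ → ∞. -/
/-- F(k,t) = ∫₀ᵗ f(k,τ) dτ. -/
noncomputable def Fint (f : ℕ → ℝ → ℝ) (k : ℕ) (t : ℝ) : ℝ :=
  ∫ τ in (0:ℝ)..t, f k τ

/-- The functional J_λ(u) = Σ_{k=1}^{T+1} (1/p(k−1))|Δu(k−1)|^{p(k−1)} − λ Σ_{k=1}^{T} F(k,u(k)). -/
noncomputable def Jlam (T : ℕ) (p : ℕ → ℝ) (f : ℕ → ℝ → ℝ) (lam : ℝ) (u : ℕ → ℝ) : ℝ :=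
  (∑ k ∈ Finset.Icc 1 (T + 1), (1 / p (k - 1)) * |u k - u (k - 1)| ^ p (k - 1))
    - lam * ∑ k ∈ Finset.Icc 1 T, Fint f k (u k)

/-!
The energy term grows at least like `‖u‖ ^ p⁻`: some increment of `u` is at least
`‖u‖ / √(T + 1)`, and its exponent is at least `p⁻`. Since `u 0 = 0`, every `|u k|` is at most
`(T + 1) ‖u‖`, so by (H1) each `F(k, u k)` is at most
`(a k + |b k|) (((T + 1) ‖u‖) ^ (q⁺ + 1) + 1)`.
Hence `J_λ u ≥ c ‖u‖ ^ p⁻ - C ‖u‖ ^ (q⁺ + 1) - D` with `c > 0`, and `q⁺ + 1 < p⁻`.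
-/

open Finset Filter

theorem Real.rpow_le_rpow_add_one {x r s : ℝ} (hx : 0 ≤ x) (hr : 0 ≤ r) (hrs : r ≤ s) :
    x ^ r ≤ x ^ s + 1 := by
  rcases le_or_gt 1 x with h1 | h1
  · linarith [Real.rpow_le_rpow_of_exponent_le h1 hrs, Real.rpow_nonneg hx s]
  · linarith [Real.rpow_le_one hx h1.le hr, Real.rpow_nonneg hx s]

theorem Real.rpow_sub_one_div_le_rpow_div {x r p P : ℝ} (hx : 0 ≤ x) (hr : 0 < r) (hrp : r ≤ p)
    (hpP : p ≤ P) : (x ^ r - 1) / P ≤ x ^ p / p := by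
  have hp : 0 < p := hr.trans_le hrp
  calc (x ^ r - 1) / P ≤ x ^ p / P := by
        gcongr
        · linarith
        · linarith [Real.rpow_le_rpow_add_one hx hr.le hrp]
    _ ≤ x ^ p / p := div_le_div_of_nonneg_left (Real.rpow_nonneg hx p) hp hpP

theorem tendsto_mul_rpow_sub_mul_rpow_sub_atTop {r s c : ℝ} (C D : ℝ) (hs : 0 < s) (hsr : s < r)
    (hc : 0 < c) : Tendsto (fun x : ℝ => c * x ^ r - C * x ^ s - D) atTop atTop := by
  have hfactor : ∀ᶠ x : ℝ in atTop, x ^ s * (c * x ^ (r - s) - C) = c * x ^ r - C * x ^ s := by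
    filter_upwards [eventually_gt_atTop 0] with x hx
    rw [mul_sub, mul_left_comm, ← Real.rpow_add hx, add_sub_cancel, mul_comm (x ^ s)]
  refine tendsto_atTop_add_const_right _ (-D) ?_ |>.congr fun x => sub_eq_add_neg _ _ |>.symm
  refine Tendsto.congr' hfactor ((tendsto_rpow_atTop hs).atTop_mul_atTop₀ ?_)
  exact tendsto_atTop_add_const_right _ (-C)
    ((tendsto_rpow_atTop (sub_pos.2 hsr)).const_mul_atTop hc)

section DiscreteNorm

variable {T : ℕ} {u : ℕ → ℝ}

theorem normH_nonneg (T : ℕ) (u : ℕ → ℝ) : 0 ≤ normH T u := Real.sqrt_nonneg _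

theorem abs_sub_le_normH {k : ℕ} (hk : k ∈ Icc 1 (T + 1)) : |u k - u (k - 1)| ≤ normH T u :=
  Real.abs_le_sqrt <| by
    rw [← sq_abs]
    exact single_le_sum (f := fun k => |u k - u (k - 1)| ^ 2) (fun _ _ => by positivity) hk

theorem abs_le_mul_normH (hu0 : u 0 = 0) {k : ℕ} (hk : k ≤ T + 1) : |u k| ≤ k * normH T u := by
  have h := dist_le_range_sum_of_dist_le (f := u) (d := fun _ => normH T u) k fun {j} hj => by
    rw [Real.dist_eq, abs_sub_comm]
    simpa using abs_sub_le_normH (u := u) (k := j + 1) (mem_Icc.2 ⟨by omega, by omega⟩)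
  simpa [Real.dist_eq, hu0] using h

theorem exists_normH_div_sqrt_le_abs_sub (T : ℕ) (u : ℕ → ℝ) :
    ∃ k ∈ Icc 1 (T + 1), normH T u / √(T + 1) ≤ |u k - u (k - 1)| := by
  obtain ⟨k, hk, hle⟩ := exists_le_of_sum_le (s := Icc 1 (T + 1))
    (f := fun _ => (∑ k ∈ Icc 1 (T + 1), |u k - u (k - 1)| ^ 2) / (T + 1))
    (g := fun k => |u k - u (k - 1)| ^ 2) ⟨1, by simp⟩ (by simp [field])
  refine ⟨k, hk, ?_⟩
  rw [normH, ← Real.sqrt_div' _ (by positivity), Real.sqrt_le_iff]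
  exact ⟨abs_nonneg _, hle⟩

end DiscreteNorm

noncomputable def pEnergy (T : ℕ) (p : ℕ → ℝ) (u : ℕ → ℝ) : ℝ :=
  ∑ k ∈ Icc 1 (T + 1), (1 / p (k - 1)) * |u k - u (k - 1)| ^ p (k - 1)

theorem Jlam_eq_pEnergy_sub (T : ℕ) (p : ℕ → ℝ) (f : ℕ → ℝ → ℝ) (lam : ℝ) (u : ℕ → ℝ) :
    Jlam T p f lam u = pEnergy T p u - lam * ∑ k ∈ Icc 1 T, Fint f k (u k) := rfl

theorem rpow_sub_one_div_le_pEnergy {T : ℕ} {p : ℕ → ℝ} {r P : ℝ} (hr : 0 < r)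
    (hrp : ∀ k ≤ T + 1, r ≤ p k) (hpP : ∀ k ≤ T + 1, p k ≤ P) (u : ℕ → ℝ) :
    ((normH T u / √(T + 1)) ^ r - 1) / P ≤ pEnergy T p u := by
  obtain ⟨k, hk, hlarge⟩ := exists_normH_div_sqrt_le_abs_sub T u
  have hk' : k - 1 ≤ T + 1 := by rw [mem_Icc] at hk; omega
  have hP : 0 < P := hr.trans_le ((hrp _ hk').trans (hpP _ hk'))
  calc ((normH T u / √(T + 1)) ^ r - 1) / P ≤ (|u k - u (k - 1)| ^ r - 1) / P := by
        have := normH_nonneg T u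
        gcongr
    _ ≤ |u k - u (k - 1)| ^ p (k - 1) / p (k - 1) :=
        Real.rpow_sub_one_div_le_rpow_div (abs_nonneg _) hr (hrp _ hk') (hpP _ hk')
    _ = (1 / p (k - 1)) * |u k - u (k - 1)| ^ p (k - 1) := (one_div_mul_eq_div _ _).symm
    _ ≤ pEnergy T p u := by
        refine single_le_sum (f := fun k => (1 / p (k - 1)) * |u k - u (k - 1)| ^ p (k - 1))
          (fun i hi => ?_) hk
        have : 0 < p (i - 1) := hr.trans_le (hrp _ (by rw [mem_Icc] at hi; omega))
        positivity

theorem abs_Fint_le {f : ℕ → ℝ → ℝ} {k : ℕ} {a b q : ℝ} (ha : 0 ≤ a) (hq : 0 ≤ q)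
    (hf : ∀ t, |f k t| ≤ a * |t| ^ q + b) (t : ℝ) : |Fint f k t| ≤ (a * |t| ^ q + b) * |t| := by
  have hbound : ∀ x ∈ Set.uIoc 0 t, ‖f k x‖ ≤ a * |t| ^ q + b := fun x hx => by
    have hxt : |x| ≤ |t| := by simpa using Set.abs_sub_left_of_mem_uIcc (Set.uIoc_subset_uIcc hx)
    grw [Real.norm_eq_abs, hf x, hxt]
  simpa [Fint] using intervalIntegral.norm_integral_le_of_norm_le_const hbound

theorem Fint_le {f : ℕ → ℝ → ℝ} {k : ℕ} {a b q s : ℝ} (ha : 0 ≤ a) (hq : 0 ≤ q)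
    (hqs : q + 1 ≤ s) (hf : ∀ t, |f k t| ≤ a * |t| ^ q + b) (t : ℝ) :
    Fint f k t ≤ (a + |b|) * (|t| ^ s + 1) := by
  have hq1 : |t| ^ (q + 1) ≤ |t| ^ s + 1 :=
    Real.rpow_le_rpow_add_one (abs_nonneg t) (by linarith) hqs
  have h1 : |t| ≤ |t| ^ s + 1 := by
    simpa using Real.rpow_le_rpow_add_one (abs_nonneg t) zero_le_one (by linarith)
  calc Fint f k t ≤ (a * |t| ^ q + b) * |t| := (le_abs_self _).trans (abs_Fint_le ha hq hf t)
    _ = a * |t| ^ (q + 1) + b * |t| := by rw [Real.rpow_add_one' (abs_nonneg t) (by linarith)]; ring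
    _ ≤ a * (|t| ^ s + 1) + |b| * (|t| ^ s + 1) := by
        refine add_le_add (by gcongr) ?_
        exact (mul_le_mul_of_nonneg_right (le_abs_self b) (abs_nonneg t)).trans (by gcongr)
    _ = (a + |b|) * (|t| ^ s + 1) := by ring

theorem sum_Fint_le {T : ℕ} {f : ℕ → ℝ → ℝ} {a b q : ℕ → ℝ} {s m : ℝ} {u : ℕ → ℝ}
    (ha : ∀ k, 1 ≤ k → k ≤ T → 0 ≤ a k) (hq : ∀ k, 1 ≤ k → k ≤ T → 0 ≤ q k)
    (hqs : ∀ k, 1 ≤ k → k ≤ T → q k + 1 ≤ s)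
    (hf : ∀ k, 1 ≤ k → k ≤ T → ∀ t : ℝ, |f k t| ≤ a k * |t| ^ q k + b k)
    (hu : ∀ k, 1 ≤ k → k ≤ T → |u k| ≤ m) :
    ∑ k ∈ Icc 1 T, Fint f k (u k) ≤ (∑ k ∈ Icc 1 T, (a k + |b k|)) * (m ^ s + 1) := by
  rw [sum_mul]
  gcongr with k hk
  obtain ⟨hk1, hkT⟩ := mem_Icc.1 hk
  refine (Fint_le (ha k hk1 hkT) (hq k hk1 hkT) (hqs k hk1 hkT) (hf k hk1 hkT) (u k)).trans ?_
  have := ha k hk1 hkT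
  have := hq k hk1 hkT
  have := hqs k hk1 hkT
  gcongr
  · linarith
  · exact hu k hk1 hkT

theorem rpow_normH_sub_le_Jlam {T : ℕ} {p : ℕ → ℝ} {f : ℕ → ℝ → ℝ} {a b q : ℕ → ℝ} {lam r s P : ℝ}
    (hlam : 0 ≤ lam) (hr : 0 < r) (hrp : ∀ k ≤ T + 1, r ≤ p k) (hpP : ∀ k ≤ T + 1, p k ≤ P)
    (ha : ∀ k, 1 ≤ k → k ≤ T → 0 ≤ a k) (hq : ∀ k, 1 ≤ k → k ≤ T → 0 ≤ q k)
    (hqs : ∀ k, 1 ≤ k → k ≤ T → q k + 1 ≤ s)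
    (hf : ∀ k, 1 ≤ k → k ≤ T → ∀ t : ℝ, |f k t| ≤ a k * |t| ^ q k + b k)
    {u : ℕ → ℝ} (hu0 : u 0 = 0) :
    1 / (P * √(T + 1) ^ r) * normH T u ^ r
        - lam * (∑ k ∈ Icc 1 T, (a k + |b k|)) * (T + 1) ^ s * normH T u ^ s
        - (1 / P + lam * ∑ k ∈ Icc 1 T, (a k + |b k|)) ≤ Jlam T p f lam u := by
  have hN := normH_nonneg T u
  have hsum := sum_Fint_le (u := u) (m := (T + 1) * normH T u) ha hq hqs hf fun k _ hkT =>
    (abs_le_mul_normH (T := T) hu0 (by omega)).trans <| by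
      gcongr
      exact_mod_cast Nat.le_succ_of_le hkT
  have henergy := rpow_sub_one_div_le_pEnergy hr hrp hpP u
  rw [Real.div_rpow hN (by positivity)] at henergy
  rw [Real.mul_rpow (by positivity) hN] at hsum
  rw [Jlam_eq_pEnergy_sub]
  have := mul_le_mul_of_nonneg_left hsum hlam
  calc _ = (normH T u ^ r / √(T + 1) ^ r - 1) / P
        - lam * ((∑ k ∈ Icc 1 T, (a k + |b k|)) * ((T + 1) ^ s * normH T u ^ s + 1)) := by
        field_simp
        ring
    _ ≤ _ := by linarith

theorem stmt4_general (T : ℕ) (p : ℕ → ℝ)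
    (q : ℕ → ℝ) (hq : ∀ k, 1 ≤ k → k ≤ T → 0 < q k)
    (pm : ℝ) (hpm : IsLeast (p '' Set.Icc 0 (T + 1)) pm)
    (qp : ℝ) (hqp : IsGreatest (q '' Set.Icc 1 T) qp)
    (f : ℕ → ℝ → ℝ)
    -- Hypothesis (H1)
    (a b : ℕ → ℝ) (ha : ∀ k, 1 ≤ k → k ≤ T → 0 < a k)
    (hH1 : ∀ k, 1 ≤ k → k ≤ T → ∀ t : ℝ, |f k t| ≤ a k * |t| ^ q k + b k)
    (hpq : qp + 1 < pm) :
    ∀ lam : ℝ, 0 < lam →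
      ∀ M : ℝ, ∃ R : ℝ, ∀ u : ℕ → ℝ, u 0 = 0 → u (T + 1) = 0 →
        R < normH T u → M ≤ Jlam T p f lam u := by
  intro lam hlam M
  obtain ⟨P, hP⟩ := ((Set.finite_Iic (T + 1)).image p).bddAbove
  have hqp0 : 0 < qp := by
    obtain ⟨j, ⟨hj1, hjT⟩, rfl⟩ := hqp.1
    exact hq j hj1 hjT
  have hpm_le : ∀ k ≤ T + 1, pm ≤ p k := fun k hk => hpm.2 ⟨k, ⟨k.zero_le, hk⟩, rfl⟩
  have hpP : ∀ k ≤ T + 1, p k ≤ P := fun k hk => hP ⟨k, hk, rfl⟩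
  have hP0 : 0 < P := by linarith [hpm_le 0 (by omega), hpP 0 (by omega)]
  have hqs : ∀ k, 1 ≤ k → k ≤ T → q k + 1 ≤ qp + 1 := fun k hk1 hkT => by
    linarith [hqp.2 ⟨k, ⟨hk1, hkT⟩, rfl⟩]
  set A := ∑ k ∈ Icc 1 T, (a k + |b k|)
  obtain ⟨R, hR⟩ := tendsto_atTop_atTop.1 (tendsto_mul_rpow_sub_mul_rpow_sub_atTop
    (c := 1 / (P * √(T + 1) ^ pm)) (lam * A * (T + 1) ^ (qp + 1)) (1 / P + lam * A)
    (by linarith) hpq (by positivity)) M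
  exact ⟨R, fun u hu0 _ hRu => (hR _ hRu.le).trans <|
    rpow_normH_sub_le_Jlam hlam.le (by linarith) hpm_le hpP
    (fun k hk1 hkT => (ha k hk1 hkT).le) (fun k hk1 hkT => (hq k hk1 hkT).le) hqs hH1 hu0⟩

theorem stmt4 (T : ℕ) (hT : 1 ≤ T) (p : ℕ → ℝ) (hp : ∀ k ≤ T + 1, 1 < p k)
    (q : ℕ → ℝ) (hq : ∀ k, 1 ≤ k → k ≤ T → 0 < q k)
    (pm : ℝ) (hpm : IsLeast (p '' Set.Icc 0 (T + 1)) pm)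
    (qp : ℝ) (hqp : IsGreatest (q '' Set.Icc 1 T) qp)
    (f : ℕ → ℝ → ℝ) (hf : ∀ k, 1 ≤ k → k ≤ T → Continuous (f k))
    -- Hypothesis (H1)
    (a b : ℕ → ℝ) (ha : ∀ k, 1 ≤ k → k ≤ T → 0 < a k)
    (hH1 : ∀ k, 1 ≤ k → k ≤ T → ∀ t : ℝ, |f k t| ≤ a k * |t| ^ q k + b k)
    (hpq : qp + 1 < pm) :
    ∀ lam : ℝ, 0 < lam →
      ∀ M : ℝ, ∃ R : ℝ, ∀ u : ℕ → ℝ, u 0 = 0 → u (T + 1) = 0 →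
        R < normH T u → M ≤ Jlam T p f lam u :=
  stmt4_general T p q hq pm hpm qp hqp f a b ha hH1 hpq
end

section
/- Assume hypothesis (H1) holds, f(k,0) ≠ 0 for at least one k ∈ {1,...,T}, and p⁻ > q⁺ + 1. Then for every λ > 0 problem (⋆) has at least one nontrivial solution. -/
/-!
Solutions of (⋆) are the critical points of the energy
`J(u) = ∑_{k=0}^{T} |Δu(k)|^{p(k)}/p(k) + λ ∑_{k=1}^{T} ∫₀^{u(k)} f(k,s) ds`
on the vectors `u(1), …, u(T)`, extended by `u(0) = u(T+1) = 0`. By the discrete Poincaré inequality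
some difference `|Δu(k)|` is at least `‖u‖/(T+1)`, so the first sum grows like `‖u‖^{p⁻}`, while by (H1)
the second is `O(‖u‖^{q⁺+1})`. As `p⁻ > q⁺ + 1`, `J` is coercive and attains its minimum, whose
Euler–Lagrange equations are (⋆). The minimizer is not `0`, since `f(k,0) ≠ 0` for some `k`.
-/

open Filter Finset Function

/-- `u` is a solution of problem (⋆) with parameter `lam`:
`u(0) = u(T+1) = 0` and
`|Δu(k)|^{p(k)−2}Δu(k) − |Δu(k−1)|^{p(k−1)−2}Δu(k−1) = λ·f(k,u(k))` for `k ∈ {1,…,T}`. -/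
def IsSolution (T : ℕ) (p : ℕ → ℝ) (f : ℕ → ℝ → ℝ) (lam : ℝ) (u : ℕ → ℝ) : Prop :=
  u 0 = 0 ∧ u (T + 1) = 0 ∧ ∀ k, 1 ≤ k → k ≤ T →
    |u (k + 1) - u k| ^ (p k - 2) * (u (k + 1) - u k)
      - |u k - u (k - 1)| ^ (p (k - 1) - 2) * (u k - u (k - 1)) = lam * f k (u k)

/-- `u` is nontrivial: it is not identically zero. -/
def Nontrivial' (T : ℕ) (u : ℕ → ℝ) : Prop :=
  ∃ k, 1 ≤ k ∧ k ≤ T ∧ u k ≠ 0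

/-- `v i` sits at index `i + 1`, with the boundary values at `0` and `T + 1` equal to `0`. -/
noncomputable def extendByZero (T : ℕ) (v : Fin T → ℝ) : ℕ → ℝ :=
  fun k => if h : 1 ≤ k ∧ k ≤ T then v ⟨k - 1, by omega⟩ else 0

noncomputable def energy (T : ℕ) (p : ℕ → ℝ) (f : ℕ → ℝ → ℝ) (lam : ℝ) (u : ℕ → ℝ) : ℝ :=
  ∑ k ∈ range (T + 1), |u (k + 1) - u k| ^ p k / p k
    + lam * ∑ k ∈ Icc 1 T, ∫ s in 0..u k, f k s

section extendByZero

variable {T : ℕ} (v : Fin T → ℝ)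

lemma extendByZero_zero : extendByZero T v 0 = 0 := by
  simp [extendByZero]

lemma extendByZero_succ_self : extendByZero T v (T + 1) = 0 := by
  simp [extendByZero]

lemma extendByZero_succ (i : Fin T) : extendByZero T v (i + 1) = v i := by
  simp [extendByZero]

lemma abs_extendByZero_le (k : ℕ) : |extendByZero T v k| ≤ ‖v‖ := by
  unfold extendByZero
  split
  · exact norm_le_pi_norm v _
  · simp

lemma continuous_extendByZero : Continuous (extendByZero T) := by
  refine continuous_pi fun k => ?_
  unfold extendByZero
  split
  · exact continuous_apply _
  · exact continuous_const

lemma update_extendByZero (i : Fin T) (t : ℝ) :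
    update (extendByZero T v) (i + 1) t = extendByZero T (update v i t) := by
  ext k
  by_cases hk : k = i + 1
  · subst hk
    simp [extendByZero_succ]
  · have hki : ∀ h : 1 ≤ k ∧ k ≤ T, (⟨k - 1, by omega⟩ : Fin T) ≠ i := fun h hi => hk <| by
      rw [← hi]; show k = k - 1 + 1; omega
    simp only [update_of_ne hk, extendByZero]
    split
    · rw [update_of_ne (hki ‹_›)]
    · rfl

end extendByZero

lemma abs_le_sum_abs_sub {u : ℕ → ℝ} (h0 : u 0 = 0) {i n : ℕ} (hin : i ≤ n) :
    |u i| ≤ ∑ k ∈ range n, |u (k + 1) - u k| :=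
  calc |u i| = |∑ k ∈ range i, (u (k + 1) - u k)| := by rw [sum_range_sub, h0, sub_zero]
    _ ≤ ∑ k ∈ range i, |u (k + 1) - u k| := abs_sum_le_sum_abs _ _
    _ ≤ ∑ k ∈ range n, |u (k + 1) - u k| :=
      sum_le_sum_of_subset_of_nonneg (range_subset_range.2 hin) fun _ _ _ => abs_nonneg _

lemma norm_le_sum_abs_sub_extendByZero {T : ℕ} (v : Fin T → ℝ) :
    ‖v‖ ≤ ∑ k ∈ range (T + 1), |extendByZero T v (k + 1) - extendByZero T v k| :=
  (pi_norm_le_iff_of_nonneg (sum_nonneg fun _ _ => abs_nonneg _)).2 fun i => by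
    rw [Real.norm_eq_abs, ← extendByZero_succ v i]
    exact abs_le_sum_abs_sub (extendByZero_zero v) (by omega)

/-- Some difference is at least `M / n ≥ 1`, and its term alone gives the bound. -/
lemma rpow_div_le_sum_abs_sub_rpow_div {u p : ℕ → ℝ} {n : ℕ} {M s : ℝ} (hn : 0 < n)
    (hs : 0 < s) (hp : ∀ k < n, s ≤ p k) (hnM : (n : ℝ) ≤ M)
    (hM : M ≤ ∑ k ∈ range n, |u (k + 1) - u k|) :
    M ^ s / ((n : ℝ) ^ s * ∑ k ∈ range n, p k) ≤ ∑ k ∈ range n, |u (k + 1) - u k| ^ p k / p k := by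
  have hn' : (0 : ℝ) < n := by exact_mod_cast hn
  have hp_pos : ∀ k ∈ range n, 0 < p k := fun k hk => hs.trans_le (hp k (mem_range.1 hk))
  obtain ⟨k, hk, hMk⟩ : ∃ k ∈ range n, M / n ≤ |u (k + 1) - u k| := by
    refine exists_le_of_sum_le (nonempty_range_iff.2 hn.ne') ?_
    rwa [sum_const, card_range, nsmul_eq_mul, mul_div_cancel₀ _ hn'.ne']
  have hMn : 1 ≤ M / n := (one_le_div hn').2 hnM
  calc M ^ s / ((n : ℝ) ^ s * ∑ k ∈ range n, p k) = (M / n) ^ s / ∑ k ∈ range n, p k := by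
        rw [Real.div_rpow (by linarith) hn'.le, div_div]
    _ ≤ |u (k + 1) - u k| ^ p k / p k := by
        refine div_le_div₀ (by positivity) ?_ (hp_pos k hk)
          (single_le_sum (fun i hi => (hp_pos i hi).le) hk)
        calc (M / n) ^ s ≤ (M / n) ^ p k :=
              Real.rpow_le_rpow_of_exponent_le hMn (hp k (mem_range.1 hk))
          _ ≤ |u (k + 1) - u k| ^ p k :=
              Real.rpow_le_rpow (by linarith) hMk (hp_pos k hk).le
    _ ≤ ∑ k ∈ range n, |u (k + 1) - u k| ^ p k / p k :=
        single_le_sum (f := fun k => |u (k + 1) - u k| ^ p k / p k)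
          (fun i hi => div_nonneg (by positivity) (hp_pos i hi).le) hk

lemma abs_integral_le_of_abs_le_mul_rpow_add {g : ℝ → ℝ} {a b q r M t : ℝ} (ha : 0 ≤ a)
    (hq : 0 ≤ q) (hqr : q ≤ r) (hM : 1 ≤ M) (ht : |t| ≤ M)
    (hg : ∀ s, |g s| ≤ a * |s| ^ q + b) :
    |∫ s in 0..t, g s| ≤ (a + |b|) * M ^ (r + 1) := by
  have hbound : ∀ s ∈ Set.uIoc 0 t, ‖g s‖ ≤ (a + |b|) * M ^ r := by
    intro s hs
    have hst : |s| ≤ M := by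
      refine le_trans ?_ ht
      rcases Set.mem_uIoc.1 hs with ⟨h0s, hst⟩ | ⟨hts, hs0⟩
      · exact abs_le_abs hst (by linarith)
      · exact abs_le_abs_of_nonpos hs0 hts.le
    have hMr : 1 ≤ M ^ r := Real.one_le_rpow hM (hq.trans hqr)
    calc ‖g s‖ ≤ a * |s| ^ q + b := hg s
      _ ≤ a * M ^ r + |b| * M ^ r := by
        gcongr
        · exact (Real.rpow_le_rpow (abs_nonneg s) hst hq).trans
            (Real.rpow_le_rpow_of_exponent_le hM hqr)
        · exact (le_abs_self b).trans (le_mul_of_one_le_right (abs_nonneg b) hMr)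
      _ = (a + |b|) * M ^ r := by ring
  calc |∫ s in 0..t, g s| ≤ (a + |b|) * M ^ r * |t - 0| :=
        intervalIntegral.norm_integral_le_of_norm_le_const hbound
    _ ≤ (a + |b|) * M ^ r * M := by rw [sub_zero]; gcongr
    _ = (a + |b|) * M ^ (r + 1) := by
        rw [Real.rpow_add_one (by linarith), mul_assoc]

lemma tendsto_mul_rpow_sub_mul_rpow_atTop {c C r s : ℝ} (hc : 0 < c) (hs : 0 < s) (hrs : r < s) :
    Tendsto (fun x : ℝ => c * x ^ s - C * x ^ r) atTop atTop := by
  have hlim : Tendsto (fun x : ℝ => c - C * x ^ (-(s - r))) atTop (nhds c) := by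
    simpa using (tendsto_rpow_neg_atTop (sub_pos.2 hrs)).const_mul C |>.const_sub c
  refine ((tendsto_rpow_atTop hs).atTop_mul_pos hc hlim).congr' ?_
  filter_upwards [eventually_gt_atTop 0] with x hx
  rw [mul_sub, mul_left_comm, ← Real.rpow_add hx]
  ring_nf

section energy

variable {T : ℕ} {p q a b : ℕ → ℝ} {f : ℕ → ℝ → ℝ} {lam pm qp : ℝ}

lemma continuous_energy (hp : ∀ k ≤ T, 0 ≤ p k)
    (hf : ∀ k, 1 ≤ k → k ≤ T → Continuous (f k)) : Continuous (energy T p f lam) := by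
  unfold energy
  refine (continuous_finsetSum _ fun k hk => ?_).add
    (continuous_const.mul (continuous_finsetSum _ fun k hk => ?_))
  · exact (((continuous_apply (k + 1)).sub (continuous_apply k)).abs.rpow_const
      fun _ => Or.inr (hp k (Nat.le_of_lt_succ (mem_range.1 hk)))).div_const _
  · obtain ⟨hk1, hkT⟩ := mem_Icc.1 hk
    exact (intervalIntegral.continuous_primitive
      (fun _ _ => (hf k hk1 hkT).intervalIntegrable _ _) 0).comp (continuous_apply k)

lemma energy_extendByZero_ge (hpm0 : 0 < pm) (hpm : ∀ k ≤ T, pm ≤ p k)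
    (ha : ∀ k, 1 ≤ k → k ≤ T → 0 ≤ a k) (hq : ∀ k, 1 ≤ k → k ≤ T → 0 ≤ q k)
    (hqp : ∀ k, 1 ≤ k → k ≤ T → q k ≤ qp)
    (hH1 : ∀ k, 1 ≤ k → k ≤ T → ∀ t : ℝ, |f k t| ≤ a k * |t| ^ q k + b k) (hlam : 0 ≤ lam)
    {v : Fin T → ℝ} (hv : T + 1 ≤ ‖v‖) :
    ((T + 1 : ℝ) ^ pm * ∑ k ∈ range (T + 1), p k)⁻¹ * ‖v‖ ^ pm
        - lam * (∑ k ∈ Icc 1 T, (a k + |b k|)) * ‖v‖ ^ (qp + 1)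
      ≤ energy T p f lam (extendByZero T v) := by
  have hv1 : 1 ≤ ‖v‖ := le_trans (by simp) hv
  have hkinetic := rpow_div_le_sum_abs_sub_rpow_div (u := extendByZero T v) T.succ_pos hpm0
    (fun k hk => hpm k (by omega)) (by push_cast; exact hv) (norm_le_sum_abs_sub_extendByZero v)
  have hpotential : -((∑ k ∈ Icc 1 T, (a k + |b k|)) * ‖v‖ ^ (qp + 1))
      ≤ ∑ k ∈ Icc 1 T, ∫ s in 0..extendByZero T v k, f k s := by
    rw [sum_mul, ← sum_neg_distrib]
    refine sum_le_sum fun k hk => ?_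
    obtain ⟨hk1, hkT⟩ := mem_Icc.1 hk
    exact neg_le_of_abs_le (abs_integral_le_of_abs_le_mul_rpow_add (ha k hk1 hkT) (hq k hk1 hkT)
      (hqp k hk1 hkT) hv1 (abs_extendByZero_le v k) (hH1 k hk1 hkT))
  push_cast at hkinetic
  rw [energy, inv_mul_eq_div]
  nlinarith [mul_le_mul_of_nonneg_left hpotential hlam]

lemma tendsto_energy_extendByZero_cocompact (hpm0 : 0 < pm) (hpm : ∀ k ≤ T, pm ≤ p k)
    (ha : ∀ k, 1 ≤ k → k ≤ T → 0 ≤ a k) (hq : ∀ k, 1 ≤ k → k ≤ T → 0 ≤ q k)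
    (hqp : ∀ k, 1 ≤ k → k ≤ T → q k ≤ qp)
    (hH1 : ∀ k, 1 ≤ k → k ≤ T → ∀ t : ℝ, |f k t| ≤ a k * |t| ^ q k + b k) (hlam : 0 ≤ lam)
    (hpq : qp + 1 < pm) :
    Tendsto (fun v => energy T p f lam (extendByZero T v)) (cocompact (Fin T → ℝ)) atTop := by
  have hP : 0 < ∑ k ∈ range (T + 1), p k :=
    sum_pos (fun k hk => hpm0.trans_le (hpm k (Nat.le_of_lt_succ (mem_range.1 hk)))) nonempty_range_add_one
  refine tendsto_atTop_mono' _ ?_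
    ((tendsto_mul_rpow_sub_mul_rpow_atTop (C := lam * ∑ k ∈ Icc 1 T, (a k + |b k|))
      (inv_pos.2 (by positivity : 0 < (T + 1 : ℝ) ^ pm * ∑ k ∈ range (T + 1), p k)) hpm0
      hpq).comp
      tendsto_norm_cocompact_atTop)
  filter_upwards [tendsto_norm_cocompact_atTop.eventually_ge_atTop ((T : ℝ) + 1)] with v hv
  exact energy_extendByZero_ge hpm0 hpm ha hq hqp hH1 hlam hv

end energy

lemma hasDerivAt_update_apply {ι : Type*} [DecidableEq ι] (u : ι → ℝ) (j k : ι) (t : ℝ) :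
    HasDerivAt (fun s => update u j s k) (if k = j then 1 else 0) t := by
  by_cases h : k = j
  · subst h
    simpa using hasDerivAt_id' t
  · simpa [h] using hasDerivAt_const t (u k)

lemma hasDerivAt_sum_abs_sub_rpow_div_update {u p : ℕ → ℝ} {n j : ℕ} (hp : ∀ k < n, 1 < p k)
    (hj : 1 ≤ j) (hjn : j < n) :
    HasDerivAt (fun t => ∑ k ∈ range n, |update u j t (k + 1) - update u j t k| ^ p k / p k)
      (|u j - u (j - 1)| ^ (p (j - 1) - 2) * (u j - u (j - 1))
        - |u (j + 1) - u j| ^ (p j - 2) * (u (j + 1) - u j)) (u j) := by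
  have hterm : ∀ k ∈ range n,
      HasDerivAt (fun t => |update u j t (k + 1) - update u j t k| ^ p k / p k)
        (|u (k + 1) - u k| ^ (p k - 2) * (u (k + 1) - u k)
          * ((if k + 1 = j then 1 else 0) - (if k = j then 1 else 0))) (u j) := by
    intro k hk
    have hpk := hp k (mem_range.1 hk)
    have hdiff := (hasDerivAt_update_apply u j (k + 1) (u j)).fun_sub
      (hasDerivAt_update_apply u j k (u j))
    refine (((hasDerivAt_abs_rpow _ hpk).comp (u j) hdiff).div_const (p k)).congr_deriv ?_
    simp only [update_eq_self]
    field_simp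
  refine (HasDerivAt.fun_sum hterm).congr_deriv ?_
  have hpred : ∀ k, k + 1 = j ↔ k = j - 1 := by omega
  simp only [mul_sub, mul_ite, mul_one, mul_zero, sum_sub_distrib, hpred, sum_ite_eq',
    mem_range, hjn, show j - 1 < n by omega, if_true, Nat.sub_add_cancel hj]

lemma hasDerivAt_sum_integral_update {u : ℕ → ℝ} {f : ℕ → ℝ → ℝ} {s : Finset ℕ} {j : ℕ}
    (hj : j ∈ s) (hf : Continuous (f j)) :
    HasDerivAt (fun t => ∑ k ∈ s, ∫ x in 0..update u j t k, f k x) (f j (u j)) (u j) := by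
  have hterm : ∀ k ∈ s, HasDerivAt (fun t => ∫ x in 0..update u j t k, f k x)
      (if k = j then f j (u j) else 0) (u j) := by
    intro k _
    by_cases h : k = j
    · subst h
      simpa using (hf.integral_hasStrictDerivAt 0 (u k)).hasDerivAt
    · simpa [h] using hasDerivAt_const (u j) (∫ x in 0..u k, f k x)
  simpa [hj] using HasDerivAt.fun_sum hterm

section eulerLagrange

variable {T : ℕ} {p : ℕ → ℝ} {f : ℕ → ℝ → ℝ} {lam : ℝ} {u : ℕ → ℝ}

lemma hasDerivAt_energy_update {j : ℕ} (hp : ∀ k ≤ T, 1 < p k) (hf : Continuous (f j))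
    (hj : 1 ≤ j) (hjT : j ≤ T) :
    HasDerivAt (fun t => energy T p f lam (update u j t))
      (|u j - u (j - 1)| ^ (p (j - 1) - 2) * (u j - u (j - 1))
        - |u (j + 1) - u j| ^ (p j - 2) * (u (j + 1) - u j) + lam * f j (u j)) (u j) :=
  (hasDerivAt_sum_abs_sub_rpow_div_update (fun k hk => hp k (by omega)) hj (by omega)).add
    ((hasDerivAt_sum_integral_update (mem_Icc.2 ⟨hj, hjT⟩) hf).const_mul lam)

lemma isSolution_of_forall_energy_le_update (hp : ∀ k ≤ T, 1 < p k)
    (hf : ∀ k, 1 ≤ k → k ≤ T → Continuous (f k)) (h0 : u 0 = 0) (hT : u (T + 1) = 0)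
    (hmin : ∀ j, 1 ≤ j → j ≤ T → ∀ t, energy T p f lam u ≤ energy T p f lam (update u j t)) :
    IsSolution T p f lam u := by
  refine ⟨h0, hT, fun j hj hjT => ?_⟩
  have hlocal : IsLocalMin (fun t => energy T p f lam (update u j t)) (u j) :=
    Eventually.of_forall fun t => by simpa only [update_eq_self] using hmin j hj hjT t
  have := hlocal.hasDerivAt_eq_zero (hasDerivAt_energy_update hp (hf j hj hjT) hj hjT)
  linarith

lemma IsSolution.nontrivial' (hu : IsSolution T p f lam u) (hlam : lam ≠ 0)
    (hf0 : ∃ k, 1 ≤ k ∧ k ≤ T ∧ f k 0 ≠ 0) : Nontrivial' T u := by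
  obtain ⟨k, hk, hkT, hfk⟩ := hf0
  by_contra hzero
  have hu0 : ∀ m ≤ T + 1, u m = 0 := by
    intro m hm
    by_contra hm0
    obtain rfl | hm1 := m.eq_zero_or_pos
    · exact hm0 hu.1
    obtain rfl | hmT := hm.eq_or_lt
    · exact hm0 hu.2.1
    · exact hzero ⟨m, hm1, by omega, hm0⟩
  have := hu.2.2 k hk hkT
  rw [hu0 (k + 1) (by omega), hu0 k (by omega), hu0 (k - 1) (by omega)] at this
  simp only [sub_self, mul_zero] at this
  exact hfk ((mul_eq_zero.1 this.symm).resolve_left hlam)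

end eulerLagrange

theorem stmt6_general (T : ℕ) (p : ℕ → ℝ) (hp : ∀ k ≤ T + 1, 1 < p k)
    (q : ℕ → ℝ) (hq : ∀ k, 1 ≤ k → k ≤ T → 0 < q k)
    (pm : ℝ) (hpm : IsLeast (p '' Set.Icc 0 (T + 1)) pm)
    (qp : ℝ) (hqp : IsGreatest (q '' Set.Icc 1 T) qp)
    (f : ℕ → ℝ → ℝ) (hf : ∀ k, 1 ≤ k → k ≤ T → Continuous (f k))
    -- Hypothesis (H1)
    (a b : ℕ → ℝ) (ha : ∀ k, 1 ≤ k → k ≤ T → 0 < a k)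
    (hH1 : ∀ k, 1 ≤ k → k ≤ T → ∀ t : ℝ, |f k t| ≤ a k * |t| ^ q k + b k)
    (hf0 : ∃ k, 1 ≤ k ∧ k ≤ T ∧ f k 0 ≠ 0)
    (hpq : qp + 1 < pm) :
    ∀ lam : ℝ, 0 < lam →
      ∃ u : ℕ → ℝ, IsSolution T p f lam u ∧ Nontrivial' T u := by
  intro lam hlam
  have hp' : ∀ k ≤ T, 1 < p k := fun k hk => hp k (by omega)
  have hpm_le : ∀ k ≤ T, pm ≤ p k := fun k hk => hpm.2 ⟨k, ⟨k.zero_le, by omega⟩, rfl⟩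
  have hpm_pos : 0 < pm := by
    obtain ⟨k, hk, rfl⟩ := hpm.1
    linarith [hp k hk.2]
  have hq_le : ∀ k, 1 ≤ k → k ≤ T → q k ≤ qp := fun k hk hkT => hqp.2 ⟨k, ⟨hk, hkT⟩, rfl⟩
  obtain ⟨v, hv⟩ := ((continuous_energy (fun k hk => zero_le_one.trans (hp' k hk).le) hf).comp
    (continuous_extendByZero (T := T))).exists_forall_le
    (tendsto_energy_extendByZero_cocompact hpm_pos hpm_le (fun k hk hkT => (ha k hk hkT).le)
      (fun k hk hkT => (hq k hk hkT).le) hq_le hH1 hlam.le hpq)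
  have hsol : IsSolution T p f lam (extendByZero T v) := by
    refine isSolution_of_forall_energy_le_update hp' hf (extendByZero_zero v)
      (extendByZero_succ_self v) fun j hj hjT t => ?_
    obtain ⟨i, rfl⟩ : ∃ i : Fin T, j = i + 1 := ⟨⟨j - 1, by omega⟩, (Nat.sub_add_cancel hj).symm⟩
    rw [update_extendByZero]
    exact hv _
  exact ⟨_, hsol, hsol.nontrivial' hlam.ne' hf0⟩

theorem stmt6 (T : ℕ) (hT : 1 ≤ T) (p : ℕ → ℝ) (hp : ∀ k ≤ T + 1, 1 < p k)
    (q : ℕ → ℝ) (hq : ∀ k, 1 ≤ k → k ≤ T → 0 < q k)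
    (pm : ℝ) (hpm : IsLeast (p '' Set.Icc 0 (T + 1)) pm)
    (qp : ℝ) (hqp : IsGreatest (q '' Set.Icc 1 T) qp)
    (f : ℕ → ℝ → ℝ) (hf : ∀ k, 1 ≤ k → k ≤ T → Continuous (f k))
    -- Hypothesis (H1)
    (a b : ℕ → ℝ) (ha : ∀ k, 1 ≤ k → k ≤ T → 0 < a k)
    (hH1 : ∀ k, 1 ≤ k → k ≤ T → ∀ t : ℝ, |f k t| ≤ a k * |t| ^ q k + b k)
    (hf0 : ∃ k, 1 ≤ k ∧ k ≤ T ∧ f k 0 ≠ 0)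
    (hpq : qp + 1 < pm) :
    ∀ lam : ℝ, 0 < lam →
      ∃ u : ℕ → ℝ, IsSolution T p f lam u ∧ Nontrivial' T u :=
  stmt6_general T p hp q hq pm hpm qp hqp f hf a b ha hH1 hf0 hpq
end

section
/- Assume hypothesis (H1) holds, f(k,0) ≠ 0 for at least one k ∈ {1,...,T}, and p⁻ = q⁺ + 1. Then there exists λ* > 0 such that for every λ ∈ (0, λ*) problem (⋆) has at least one nontrivial solution. -/
/-! Solutions of (⋆) are the critical points, in the interior coordinates `u 1, …, u T`, of the
energy `∑ⱼ |Δu(j)|^{p(j)}/p(j) + λ ∑ₖ ∫₀^{u(k)} f(k, ·)`. Minimise it over the compact box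
`|u k| ≤ T + 1`, on which the potential term is bounded by some `C`. If `|u k| = T + 1` for some
`k`, one of the `k` steps from `u 0 = 0` has `|Δu(j)| ≥ 1`, so the energy is at least
`1/p⁺ - λC > 0 = energy 0` once `λ < 1/(p⁺(C + 1))`. Hence the minimiser is interior and solves the
Euler–Lagrange equations, which are (⋆); it is nonzero since `0` solves (⋆) only if all `f(k, 0)`
vanish. -/

open Function

namespace DiscretePLaplacian

noncomputable def gradEnergy (T : ℕ) (p : ℕ → ℝ) (u : ℕ → ℝ) : ℝ :=
  ∑ j ∈ Finset.range (T + 1), |u (j + 1) - u j| ^ p j / p j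

noncomputable def potential (T : ℕ) (f : ℕ → ℝ → ℝ) (u : ℕ → ℝ) : ℝ :=
  ∑ k ∈ Finset.Icc 1 T, ∫ s in (0 : ℝ)..u k, f k s

noncomputable def energy (T : ℕ) (p : ℕ → ℝ) (f : ℕ → ℝ → ℝ) (lam : ℝ) (u : ℕ → ℝ) : ℝ :=
  gradEnergy T p u + lam * potential T f u

def box (T : ℕ) (R : ℝ) : Set (ℕ → ℝ) :=
  Set.univ.pi fun k => if k ∈ Finset.Icc 1 T then Set.Icc (-R) R else {0}

variable {T : ℕ} {p : ℕ → ℝ} {f : ℕ → ℝ → ℝ} {lam R : ℝ} {u : ℕ → ℝ}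

theorem isCompact_box (T : ℕ) (R : ℝ) : IsCompact (box T R) :=
  isCompact_univ_pi fun k => by
    split
    · exact isCompact_Icc
    · exact isCompact_singleton

theorem zero_mem_box (hR : 0 ≤ R) : (0 : ℕ → ℝ) ∈ box T R := fun k _ => by
  dsimp only
  split
  · exact ⟨by simpa using hR, hR⟩
  · rfl

theorem apply_eq_zero_of_mem_box (hu : u ∈ box T R) {k : ℕ} (hk : k ∉ Finset.Icc 1 T) :
    u k = 0 := by
  simpa [hk] using hu k (Set.mem_univ k)

theorem update_mem_box (hu : u ∈ box T R) {k : ℕ} (hk : k ∈ Finset.Icc 1 T) {t : ℝ}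
    (ht : |t| ≤ R) : update u k t ∈ box T R := by
  intro i _
  rcases eq_or_ne i k with rfl | hik
  · simpa [hk, abs_le] using ht
  · simpa [update_of_ne hik] using hu i (Set.mem_univ i)

theorem continuous_gradEnergy (hp : ∀ j ≤ T, 0 ≤ p j) :
    Continuous (gradEnergy T p) :=
  continuous_finsetSum _ fun j hj =>
    ((((continuous_apply (j + 1)).sub (continuous_apply j)).abs.rpow_const
      fun _ => Or.inr (hp j (Finset.mem_range_succ_iff.mp hj)))).div_const _

theorem continuous_potential (hf : ∀ k, 1 ≤ k → k ≤ T → Continuous (f k)) :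
    Continuous (potential T f) :=
  continuous_finsetSum _ fun k hk => by
    obtain ⟨hk1, hkT⟩ := Finset.mem_Icc.mp hk
    exact (intervalIntegral.continuous_primitive
      (fun _ _ => (hf k hk1 hkT).intervalIntegrable _ _) 0).comp (continuous_apply k)

theorem gradEnergy_zero : gradEnergy T p 0 = 0 := by
  refine Finset.sum_eq_zero fun j _ => ?_
  -- also when `p j = 0`, where `0 ^ 0 / 0 = 1 / 0 = 0`
  rcases eq_or_ne (p j) 0 with h | h <;> simp [h]

theorem energy_zero : energy T p f lam 0 = 0 := by
  simp [energy, gradEnergy_zero, potential]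

theorem exists_one_le_abs_sub_succ {m : ℕ} (hm : 0 < m) (h : (m : ℝ) ≤ |u m - u 0|) :
    ∃ j < m, 1 ≤ |u (j + 1) - u j| := by
  by_contra! hsmall
  have := calc
    |u m - u 0| = |∑ j ∈ Finset.range m, (u (j + 1) - u j)| := by rw [Finset.sum_range_sub]
    _ ≤ ∑ j ∈ Finset.range m, |u (j + 1) - u j| := Finset.abs_sum_le_sum_abs _ _
    _ < ∑ _j ∈ Finset.range m, (1 : ℝ) :=
      Finset.sum_lt_sum_of_nonempty (Finset.nonempty_range_iff.mpr hm.ne')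
        fun j hj => hsmall j (Finset.mem_range.mp hj)
  simp only [Finset.sum_const, Finset.card_range, nsmul_eq_mul, mul_one] at this
  linarith

theorem inv_le_gradEnergy (hp : ∀ j ≤ T, 1 < p j) {P : ℝ} (hP : ∀ j ≤ T, p j ≤ P)
    {j : ℕ} (hj : j ≤ T) (hjump : 1 ≤ |u (j + 1) - u j|) : P⁻¹ ≤ gradEnergy T p u := by
  have hpj := hp j hj
  calc P⁻¹ ≤ (p j)⁻¹ := inv_anti₀ (by linarith) (hP j hj)
    _ ≤ |u (j + 1) - u j| ^ p j / p j := by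
      rw [inv_eq_one_div]
      exact div_le_div_of_nonneg_right (Real.one_le_rpow hjump (by linarith)) (by linarith)
    _ ≤ gradEnergy T p u :=
      Finset.single_le_sum (f := fun i => |u (i + 1) - u i| ^ p i / p i)
        (fun i hi => div_nonneg (by positivity)
          (zero_lt_one.trans (hp i (Finset.mem_range_succ_iff.mp hi))).le)
        (Finset.mem_range_succ_iff.mpr hj)

theorem hasDerivAt_update_apply (u : ℕ → ℝ) (k i : ℕ) :
    HasDerivAt (fun t => update u k t i) (if i = k then 1 else 0) (u k) := by
  rcases eq_or_ne i k with rfl | hik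
  · simpa using hasDerivAt_id' (u i)
  · simpa [update_of_ne hik, hik] using hasDerivAt_const (u k) (u i)

theorem hasDerivAt_gradEnergy_update (hp : ∀ j ≤ T, 1 < p j) (u : ℕ → ℝ)
    {k : ℕ} (hk1 : 1 ≤ k) (hkT : k ≤ T) :
    HasDerivAt (fun t => gradEnergy T p (update u k t))
      (|u k - u (k - 1)| ^ (p (k - 1) - 2) * (u k - u (k - 1))
        - |u (k + 1) - u k| ^ (p k - 2) * (u (k + 1) - u k)) (u k) := by
  set φ : ℕ → ℝ := fun j => |u (j + 1) - u j| ^ (p j - 2) * (u (j + 1) - u j)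
  have hterm : ∀ j ∈ Finset.range (T + 1),
      HasDerivAt (fun t => |update u k t (j + 1) - update u k t j| ^ p j / p j)
        (φ j * ((if j + 1 = k then 1 else 0) - (if j = k then 1 else 0))) (u k) := by
    intro j hj
    have hpj := hp j (Finset.mem_range_succ_iff.mp hj)
    have hdiff := (hasDerivAt_update_apply u k (j + 1)).sub (hasDerivAt_update_apply u k j)
    have habs := hasDerivAt_abs_rpow (u (j + 1) - u j) hpj
    refine ((habs.comp_of_eq (u k) hdiff (by simp)).div_const (p j)).congr_deriv ?_
    field_simp
    ring
  have hsum : ∑ j ∈ Finset.range (T + 1),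
      φ j * ((if j + 1 = k then 1 else 0) - (if j = k then 1 else 0)) = φ (k - 1) - φ k := by
    have hshift : ∀ j, (j + 1 = k) = (j = k - 1) := fun j => propext (by omega)
    simp only [hshift, mul_sub, mul_ite, mul_one, mul_zero, Finset.sum_sub_distrib,
      Finset.sum_ite_eq', Finset.mem_range]
    rw [if_pos (by omega), if_pos (by omega)]
  have := HasDerivAt.fun_sum hterm
  rw [hsum] at this
  simpa only [gradEnergy, φ, Nat.sub_add_cancel hk1] using this

theorem hasDerivAt_potential_update (hf : ∀ k, 1 ≤ k → k ≤ T → Continuous (f k))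
    (u : ℕ → ℝ) {k : ℕ} (hk1 : 1 ≤ k) (hkT : k ≤ T) :
    HasDerivAt (fun t => potential T f (update u k t)) (f k (u k)) (u k) := by
  have hterm : ∀ i ∈ Finset.Icc 1 T, HasDerivAt (fun t => ∫ s in (0 : ℝ)..update u k t i, f i s)
      (f i (u i) * if i = k then 1 else 0) (u k) := by
    intro i hi
    obtain ⟨hi1, hiT⟩ := Finset.mem_Icc.mp hi
    exact ((hf i hi1 hiT).integral_hasStrictDerivAt 0 (u i)).hasDerivAt.comp_of_eq (u k)
      (hasDerivAt_update_apply u k i) (by simp)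
  have := HasDerivAt.fun_sum hterm
  simp only [mul_ite, mul_one, mul_zero, Finset.sum_ite_eq', Finset.mem_Icc] at this
  rwa [if_pos ⟨hk1, hkT⟩] at this

theorem isSolution_of_isLocalMin_update (hp : ∀ j ≤ T, 1 < p j)
    (hf : ∀ k, 1 ≤ k → k ≤ T → Continuous (f k)) (hu0 : u 0 = 0) (huT : u (T + 1) = 0)
    (hmin : ∀ k, 1 ≤ k → k ≤ T → IsLocalMin (fun t => energy T p f lam (update u k t)) (u k)) :
    IsSolution T p f lam u := by
  refine ⟨hu0, huT, fun k hk1 hkT => ?_⟩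
  have hderiv := (hasDerivAt_gradEnergy_update hp u hk1 hkT).add
    ((hasDerivAt_potential_update hf u hk1 hkT).const_mul lam)
  have := (hmin k hk1 hkT).hasDerivAt_eq_zero hderiv
  linarith

theorem nontrivial_of_isSolution (hlam : lam ≠ 0) (hu : IsSolution T p f lam u)
    (hf0 : ∃ k, 1 ≤ k ∧ k ≤ T ∧ f k 0 ≠ 0) : Nontrivial' T u := by
  obtain ⟨hu0, huT, heq⟩ := hu
  obtain ⟨k, hk1, hkT, hfk⟩ := hf0
  by_contra hzero
  simp only [Nontrivial', not_exists, not_and, not_not] at hzero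
  have hvanish : ∀ i ≤ T + 1, u i = 0 := fun i hi => by
    rcases Nat.eq_zero_or_pos i with rfl | hi0
    · exact hu0
    rcases hi.eq_or_lt with rfl | hiT
    · exact huT
    exact hzero i hi0 (by omega)
  have hk := heq k hk1 hkT
  rw [hvanish k (by omega), hvanish (k + 1) (by omega), hvanish (k - 1) (by omega)] at hk
  simp only [sub_self, mul_zero, zero_eq_mul] at hk
  exact hk.resolve_left hlam |> hfk

theorem abs_lt_of_energy_nonpos (hp : ∀ j ≤ T, 1 < p j) {P : ℝ} (hP : ∀ j ≤ T, p j ≤ P)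
    (hlow : -P⁻¹ < lam * potential T f u) (hE : energy T p f lam u ≤ 0) (hu0 : u 0 = 0) {k : ℕ} (hk1 : 1 ≤ k) (hkT : k ≤ T) :
    |u k| < T + 1 := by
  by_contra! hlarge
  have hkR : (k : ℝ) ≤ |u k - u 0| := by
    rw [hu0, sub_zero]
    have : (k : ℝ) ≤ T := by exact_mod_cast hkT
    linarith
  obtain ⟨j, hjk, hjump⟩ := exists_one_le_abs_sub_succ (by omega) hkR
  have := inv_le_gradEnergy hp hP (by omega) hjump
  unfold energy at hE
  linarith

theorem exists_isSolution_of_abs_potential_le (hp : ∀ j ≤ T, 1 < p j)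
    (hf : ∀ k, 1 ≤ k → k ≤ T → Continuous (f k)) {P C : ℝ} (hP : ∀ j ≤ T, p j ≤ P)
    (hC : ∀ u ∈ box T (T + 1), |potential T f u| ≤ C) (hlam : 0 ≤ lam)
    (hsmall : lam * C < P⁻¹) : ∃ u, IsSolution T p f lam u := by
  have hcont : Continuous (energy T p f lam) :=
    (continuous_gradEnergy fun j hj => (zero_lt_one.trans (hp j hj)).le).add
      (continuous_const.mul (continuous_potential hf))
  have hzero : (0 : ℕ → ℝ) ∈ box T (T + 1) := zero_mem_box (by positivity)
  obtain ⟨u, hu, hmin⟩ := (isCompact_box T (T + 1)).exists_isMinOn ⟨0, hzero⟩ hcont.continuousOn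
  have hE : energy T p f lam u ≤ 0 := (isMinOn_iff.mp hmin 0 hzero).trans_eq energy_zero
  have hu0 : u 0 = 0 := apply_eq_zero_of_mem_box hu (by simp)
  have hlow : -P⁻¹ < lam * potential T f u := by
    nlinarith [neg_abs_le (potential T f u), hC u hu]
  refine ⟨u, isSolution_of_isLocalMin_update hp hf hu0 (apply_eq_zero_of_mem_box hu (by simp))
    fun k hk1 hkT => ?_⟩
  have hk : k ∈ Finset.Icc 1 T := Finset.mem_Icc.mpr ⟨hk1, hkT⟩
  have hint := abs_lt_of_energy_nonpos hp hP hlow hE hu0 hk1 hkT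
  filter_upwards [(isOpen_lt continuous_abs continuous_const).mem_nhds hint] with t ht
  simpa only [update_eq_self] using isMinOn_iff.mp hmin _ (update_mem_box hu hk ht.le)

end DiscretePLaplacian

open DiscretePLaplacian in
theorem stmt7_general (T : ℕ) (p : ℕ → ℝ) (hp : ∀ k ≤ T + 1, 1 < p k)
    (f : ℕ → ℝ → ℝ) (hf : ∀ k, 1 ≤ k → k ≤ T → Continuous (f k))
    (hf0 : ∃ k, 1 ≤ k ∧ k ≤ T ∧ f k 0 ≠ 0) :
    ∃ lamStar > (0:ℝ), ∀ lam : ℝ, 0 < lam → lam < lamStar →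
      ∃ u : ℕ → ℝ, IsSolution T p f lam u ∧ Nontrivial' T u := by
  have hp' : ∀ j ≤ T, 1 < p j := fun j hj => hp j (by omega)
  obtain ⟨C, hC⟩ := (isCompact_box T (T + 1)).exists_bound_of_continuousOn
    (continuous_potential hf).continuousOn
  have hC0 : 0 ≤ C := (norm_nonneg _).trans (hC 0 (zero_mem_box (by positivity)))
  set P := (Finset.range (T + 1)).sup' Finset.nonempty_range_add_one p
  have hP : ∀ j ≤ T, p j ≤ P := fun j hj => Finset.le_sup' p (Finset.mem_range_succ_iff.mpr hj)
  have hP0 : 0 < P := zero_lt_one.trans ((hp' 0 (Nat.zero_le T)).trans_le (hP 0 (Nat.zero_le T)))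
  refine ⟨P⁻¹ / (C + 1), by positivity, fun lam hlam hlt => ?_⟩
  have hsmall : lam * C < P⁻¹ := by
    rw [lt_div_iff₀ (by positivity)] at hlt
    nlinarith
  obtain ⟨u, hu⟩ := exists_isSolution_of_abs_potential_le hp' hf hP hC hlam.le hsmall
  exact ⟨u, hu, nontrivial_of_isSolution hlam.ne' hu hf0⟩

theorem stmt7 (T : ℕ) (hT : 1 ≤ T) (p : ℕ → ℝ) (hp : ∀ k ≤ T + 1, 1 < p k)
    (q : ℕ → ℝ) (hq : ∀ k, 1 ≤ k → k ≤ T → 0 < q k)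
    (pm : ℝ) (hpm : IsLeast (p '' Set.Icc 0 (T + 1)) pm)
    (qp : ℝ) (hqp : IsGreatest (q '' Set.Icc 1 T) qp)
    (f : ℕ → ℝ → ℝ) (hf : ∀ k, 1 ≤ k → k ≤ T → Continuous (f k))
    -- Hypothesis (H1)
    (a b : ℕ → ℝ) (ha : ∀ k, 1 ≤ k → k ≤ T → 0 < a k)
    (hH1 : ∀ k, 1 ≤ k → k ≤ T → ∀ t : ℝ, |f k t| ≤ a k * |t| ^ q k + b k)
    (hf0 : ∃ k, 1 ≤ k ∧ k ≤ T ∧ f k 0 ≠ 0)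
    (hpq : pm = qp + 1) :
    ∃ lamStar > (0:ℝ), ∀ lam : ℝ, 0 < lam → lam < lamStar →
      ∃ u : ℕ → ℝ, IsSolution T p f lam u ∧ Nontrivial' T u :=
  stmt7_general T p hp f hf hf0
end
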